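/- For two independent uniform random variables $x_1, x_2$ on $(0,1]$ and distinct weights $w_1 > w_2 > 0$, $\mathrm{Prob}(x_1^{w_1} x_2^{w_2} \le \tau) = (w_1 - w_2)^{-1}[w_1 \tau^{1/w_1} - w_2 \tau^{1/w_2}]$ for $\tau \in (0,1]$. -/

import Mathlib

/-! Independence makes `(x₁, x₂)` uniform on the unit square, and writing `τ = t ^ w₁`, the
condition `a ^ w₁ * b ^ w₂ ≤ τ` on that square reads `b ≤ (t / a) ^ s` with `s = w₁ / w₂ > 1`.
So the probability is `∫₀¹ min 1 ((t / a) ^ s) da = t + ∫ₜ¹ (t / a) ^ s da = (s t - t ^ s) / (s - 1)`,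
and `t = τ ^ (1 / w₁)`, `t ^ s = τ ^ (1 / w₂)`. -/

open MeasureTheory ProbabilityTheory Set

theorem ProbabilityTheory.IndepFun.measure_preimage_prodMk {Ω α β : Type*} [MeasurableSpace Ω]
    [MeasurableSpace α] [MeasurableSpace β] {μ : Measure Ω} [IsFiniteMeasure μ] {X : Ω → α}
    {Y : Ω → β} (hXY : IndepFun X Y μ) (hX : Measurable X) (hY : Measurable Y)
    {s : Set (α × β)} (hs : MeasurableSet s) :
    μ ((fun ω => (X ω, Y ω)) ⁻¹' s) = (μ.map X).prod (μ.map Y) s := by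
  rw [← (indepFun_iff_map_prod_eq_prod_map_map hX.aemeasurable hY.aemeasurable).1 hXY,
    Measure.map_apply (hX.prodMk hY) hs]

theorem Real.rpow_mul_rpow_le_rpow_iff {a b t w₁ w₂ : ℝ} (ha : 0 < a) (hb : 0 ≤ b) (ht : 0 ≤ t)
    (hw₂ : 0 < w₂) : a ^ w₁ * b ^ w₂ ≤ t ^ w₁ ↔ b ≤ (t / a) ^ (w₁ / w₂) := by
  rw [← Real.rpow_le_rpow_iff hb (by positivity) hw₂, ← Real.rpow_mul (div_nonneg ht ha.le),
    div_mul_cancel₀ _ hw₂.ne', Real.div_rpow ht ha.le, le_div_iff₀ (Real.rpow_pos_of_pos ha _),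
    mul_comm]

theorem measurableSet_rpow_mul_rpow_le (w₁ w₂ c : ℝ) :
    MeasurableSet {p : ℝ × ℝ | p.1 ^ w₁ * p.2 ^ w₂ ≤ c} :=
  measurableSet_le (by fun_prop) measurable_const

theorem restrict_Ioc_zero_one_apply_Iic (c : ℝ) :
    volume.restrict (Ioc (0 : ℝ) 1) (Iic c) = ENNReal.ofReal (min 1 c) := by
  rw [Measure.restrict_apply measurableSet_Iic, inter_comm, Ioc_inter_Iic, Real.volume_Ioc,
    sub_zero]

section MinOneDivRpow

variable {t s : ℝ}

theorem integrableOn_min_one_div_rpow (ht : 0 ≤ t) :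
    IntegrableOn (fun a => min 1 ((t / a) ^ s)) (Ioc 0 1) := by
  refine Integrable.mono' (integrable_const (1 : ℝ))
    (by fun_prop : Measurable fun a : ℝ => min 1 ((t / a) ^ s)).aestronglyMeasurable ?_
  filter_upwards [self_mem_ae_restrict measurableSet_Ioc] with a ha
  rw [Real.norm_of_nonneg (le_min zero_le_one (Real.rpow_nonneg (div_nonneg ht ha.1.le) s))]
  exact min_le_left _ _

theorem integral_Ioc_zero_one_min_one_div_rpow (ht₀ : 0 < t) (ht₁ : t ≤ 1) (hs : 1 < s) :
    ∫ a in Ioc 0 1, min 1 ((t / a) ^ s) = (s * t - t ^ s) / (s - 1) := by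
  have hint := integrableOn_min_one_div_rpow (s := s) ht₀.le
  have below : ∫ a in Ioc 0 t, min 1 ((t / a) ^ s) = t := by
    rw [setIntegral_congr_fun measurableSet_Ioc (g := fun _ => (1 : ℝ)) fun a ha => min_eq_left
      (Real.one_le_rpow ((one_le_div ha.1).2 ha.2) (by linarith))]
    simp [ht₀.le]
  have above : ∫ a in Ioc t 1, min 1 ((t / a) ^ s) =
      t ^ s * ((1 - t ^ (-s + 1)) / (-s + 1)) := by
    have h0 : (0 : ℝ) ∉ uIcc t 1 := by simp [uIcc_of_le ht₁, ht₀.not_ge]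
    rw [setIntegral_congr_fun measurableSet_Ioc (g := fun a => t ^ s * a ^ (-s)) ?_,
      integral_const_mul, ← intervalIntegral.integral_of_le ht₁,
      integral_rpow (Or.inr ⟨by linarith, h0⟩), Real.one_rpow]
    intro a ⟨hta, _⟩
    have ha : 0 < a := ht₀.trans hta
    dsimp only
    rw [min_eq_right (Real.rpow_lt_one (by positivity) ((div_lt_one ha).2 hta)
      (by linarith)).le, Real.div_rpow ht₀.le ha.le, Real.rpow_neg ha.le, div_eq_mul_inv]
  have hcancel : t ^ s * t ^ (-s + 1) = t := by
    rw [← Real.rpow_add ht₀, add_neg_cancel_left, Real.rpow_one]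
  rw [← Ioc_union_Ioc_eq_Ioc ht₀.le ht₁, setIntegral_union (Ioc_disjoint_Ioc_of_le le_rfl)
    measurableSet_Ioc (hint.mono_set (Ioc_subset_Ioc_right ht₁))
    (hint.mono_set (Ioc_subset_Ioc_left ht₀.le)), below, above, mul_div_assoc', mul_sub,
    mul_one, hcancel]
  have : s - 1 ≠ 0 := by linarith
  have : -s + 1 ≠ 0 := by linarith
  field_simp
  ring

end MinOneDivRpow

theorem restrict_Ioc_zero_one_prod_apply_rpow_mul_rpow_le {t w₁ w₂ : ℝ} (ht₀ : 0 < t)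
    (ht₁ : t ≤ 1) (hw₂ : 0 < w₂) (hw : w₂ < w₁) :
    (volume.restrict (Ioc (0 : ℝ) 1)).prod (volume.restrict (Ioc (0 : ℝ) 1))
        {p : ℝ × ℝ | p.1 ^ w₁ * p.2 ^ w₂ ≤ t ^ w₁} =
      ENNReal.ofReal ((w₁ / w₂ * t - t ^ (w₁ / w₂)) / (w₁ / w₂ - 1)) := by
  set ν := volume.restrict (Ioc (0 : ℝ) 1)
  have hsection : ∀ a ∈ Ioc (0 : ℝ) 1, ν (Prod.mk a ⁻¹' {p | p.1 ^ w₁ * p.2 ^ w₂ ≤ t ^ w₁}) =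
      ENNReal.ofReal (min 1 ((t / a) ^ (w₁ / w₂))) := by
    intro a ha
    rw [← restrict_Ioc_zero_one_apply_Iic, Measure.restrict_apply' measurableSet_Ioc,
      Measure.restrict_apply' measurableSet_Ioc]
    congr 1
    ext b
    simp only [mem_inter_iff, mem_preimage, mem_ofPred_eq, mem_Iic, mem_Ioc]
    exact and_congr_left fun hb => Real.rpow_mul_rpow_le_rpow_iff ha.1 hb.1.le ht₀.le hw₂
  have hnonneg : 0 ≤ᵐ[ν] fun a => min 1 ((t / a) ^ (w₁ / w₂)) := by
    filter_upwards [self_mem_ae_restrict measurableSet_Ioc] with a ha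
    exact le_min zero_le_one (Real.rpow_nonneg (div_nonneg ht₀.le ha.1.le) _)
  rw [Measure.prod_apply (measurableSet_rpow_mul_rpow_le w₁ w₂ _),
    setLIntegral_congr_fun measurableSet_Ioc hsection,
    ← ofReal_integral_eq_lintegral_ofReal (integrableOn_min_one_div_rpow ht₀.le) hnonneg,
    integral_Ioc_zero_one_min_one_div_rpow ht₀ ht₁ ((one_lt_div hw₂).2 hw)]

theorem good_two_pvalues
    {Ω : Type*} [MeasurableSpace Ω] (μ : Measure Ω) [IsProbabilityMeasure μ]
    (x₁ x₂ : Ω → ℝ) (hmeas₁ : Measurable x₁) (hmeas₂ : Measurable x₂)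
    (hunif₁ : μ.map x₁ = volume.restrict (Set.Ioc 0 1))
    (hunif₂ : μ.map x₂ = volume.restrict (Set.Ioc 0 1))
    (hindep : IndepFun x₁ x₂ μ)
    (w₁ w₂ : ℝ) (hw₂ : 0 < w₂) (hw : w₂ < w₁)
    (τ : ℝ) (hτ : τ ∈ Set.Ioc (0 : ℝ) 1) :
    μ {ω | x₁ ω ^ w₁ * x₂ ω ^ w₂ ≤ τ} =
      ENNReal.ofReal ((w₁ - w₂)⁻¹ * (w₁ * τ ^ (1 / w₁) - w₂ * τ ^ (1 / w₂))) := by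
  have hw₁ : 0 < w₁ := hw₂.trans hw
  obtain ⟨t, ht₀, ht₁, rfl⟩ : ∃ t : ℝ, 0 < t ∧ t ≤ 1 ∧ τ = t ^ w₁ :=
    ⟨τ ^ w₁⁻¹, Real.rpow_pos_of_pos hτ.1 _, Real.rpow_le_one hτ.1.le hτ.2 (by positivity),
      (Real.rpow_inv_rpow hτ.1.le hw₁.ne').symm⟩
  rw [show {ω | x₁ ω ^ w₁ * x₂ ω ^ w₂ ≤ t ^ w₁} = (fun ω => (x₁ ω, x₂ ω)) ⁻¹'
      {p : ℝ × ℝ | p.1 ^ w₁ * p.2 ^ w₂ ≤ t ^ w₁} from rfl,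
    hindep.measure_preimage_prodMk hmeas₁ hmeas₂ (measurableSet_rpow_mul_rpow_le w₁ w₂ _),
    hunif₁, hunif₂,
    restrict_Ioc_zero_one_prod_apply_rpow_mul_rpow_le ht₀ ht₁ hw₂ hw,
    ← Real.rpow_mul ht₀.le, ← Real.rpow_mul ht₀.le, mul_one_div_cancel hw₁.ne', Real.rpow_one,
    mul_one_div]
  congr 1
  have : w₁ - w₂ ≠ 0 := by linarith
  field_simp
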